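/- arXiv:1103.2552 — 3 statements merged into one kernel-verified Lean document; each statement's English description precedes it below -/
import Mathlib

section
/- Let d, N be natural numbers with d ≥ 1 and N ≥ 2, and let α be a real number with α > 0 and α ≥ d − 2. Then the energy functional E_α(x_1,…,x_N) = ∑_{i≠j} ‖x_i − x_j‖^{−α}, defined on N-tuples of pairwise distinct points of the unit sphere S^d ⊂ ℝ^{d+1}, has no local maximum: there is no tuple (x_1,…,x_N) of pairwise distinct points of S^d and neighborhood U of it in (S^d)^N such that E_α(y_1,…,y_N) ≤ E_α(x_1,…,x_N) for every tuple (y_1,…,y_N) ∈ U of pairwise distinct points. -/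
open scoped RealInnerProductSpace

/-- The Riesz energy functional `E_α` on tuples of points of the sphere `S^d`:
`E_α(x_1,…,x_N) = ∑_{i≠j} ‖x_i − x_j‖^{−α}`. -/
noncomputable def rieszEnergy (d N : ℕ) (α : ℝ)
    (x : Fin N → Metric.sphere (0 : EuclideanSpace ℝ (Fin (d + 1))) 1) : ℝ :=
  ∑ i, ∑ j ∈ Finset.univ.filter (· ≠ i),
    ‖(x i : EuclideanSpace ℝ (Fin (d + 1))) - (x j : EuclideanSpace ℝ (Fin (d + 1)))‖ ^ (-α)



open Filter Topology

theorem secondDerivTest {f f' : ℝ → ℝ} {L : ℝ}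
    (hf : ∀ᶠ t in 𝓝 (0:ℝ), HasDerivAt f (f' t) t)
    (hf' : HasDerivAt f' L 0) (hmax : IsLocalMax f 0) : L ≤ 0 := by
  by_contra hL
  push_neg at hL
  have hd0 : f' 0 = 0 := by
    have h1 : deriv f 0 = 0 := hmax.deriv_eq_zero
    have h2 : deriv f 0 = f' 0 := hf.self_of_nhds.deriv
    linarith [h1, h2]
  -- slope of f' tends to L > 0
  have hslope : Tendsto (slope f' 0) (𝓝[≠] 0) (𝓝 L) :=
    hasDerivAt_iff_tendsto_slope.1 hf'
  have hev : ∀ᶠ t in 𝓝[>] (0:ℝ), 0 < slope f' 0 t :=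
    (hslope.mono_left (nhdsWithin_mono 0 fun t ht => ne_of_gt ht)).eventually
      (eventually_gt_nhds hL)
  have hev2 : ∀ᶠ t in 𝓝[>] (0:ℝ), 0 < f' t := by
    filter_upwards [hev, self_mem_nhdsWithin] with t ht ht0
    have : slope f' 0 t = f' t / t := by
      simp [slope_def_field, hd0, div_eq_iff (ne_of_gt (show (0:ℝ) < t from ht0))]
    rw [this] at ht
    have := mul_pos ht (show (0:ℝ) < t from ht0)
    have htne : (t:ℝ) ≠ 0 := ne_of_gt ht0
    calc (0:ℝ) < f' t / t * t := this
      _ = f' t := by field_simp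
  obtain ⟨u, hu0, hu⟩ := mem_nhdsGT_iff_exists_Ioo_subset.1 hev2
  obtain ⟨δ, hδ0, hδ⟩ := Metric.eventually_nhds_iff.1 hf
  obtain ⟨r, hr0, hr⟩ := Metric.eventually_nhds_iff.1 hmax
  set t0 : ℝ := min u (min δ r) / 2 with ht0def
  have ht0pos : 0 < t0 := by
    have : 0 < min u (min δ r) := lt_min (by exact hu0) (lt_min hδ0 hr0)
    positivity
  have ht0u : t0 < u := by
    have h1 : min u (min δ r) ≤ u := min_le_left _ _
    have : 0 < min u (min δ r) := lt_min hu0 (lt_min hδ0 hr0)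
    linarith
  have ht0δ : t0 < δ := by
    have h1 : min u (min δ r) ≤ δ := le_trans (min_le_right _ _) (min_le_left _ _)
    have : 0 < min u (min δ r) := lt_min hu0 (lt_min hδ0 hr0)
    linarith
  have ht0r : t0 < r := by
    have h1 : min u (min δ r) ≤ r := le_trans (min_le_right _ _) (min_le_right _ _)
    have : 0 < min u (min δ r) := lt_min hu0 (lt_min hδ0 hr0)
    linarith
  have hder : ∀ s ∈ Set.Icc (0:ℝ) t0, HasDerivAt f (f' s) s := by
    intro s hs
    apply hδ
    rw [Real.dist_eq]
    rcases hs with ⟨h1, h2⟩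
    rw [abs_of_nonneg (by linarith [h1] : (0:ℝ) ≤ s - 0)]
    linarith
  have hmono : StrictMonoOn f (Set.Icc (0:ℝ) t0) := by
    apply strictMonoOn_of_deriv_pos (convex_Icc _ _)
    · intro s hs
      exact (hder s hs).differentiableAt.continuousAt.continuousWithinAt
    · intro s hs
      rw [interior_Icc] at hs
      rw [(hder s ⟨le_of_lt hs.1, le_of_lt hs.2⟩).deriv]
      exact hu ⟨hs.1, lt_trans hs.2 ht0u⟩
  have hlt : f 0 < f t0 :=
    hmono ⟨le_refl _, le_of_lt ht0pos⟩ ⟨le_of_lt ht0pos, le_refl _⟩ ht0pos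
  have : f t0 ≤ f 0 := by
    apply hr
    rw [Real.dist_eq, abs_of_nonneg (by linarith : (0:ℝ) ≤ t0 - 0)]
    linarith
  linarith

lemma key_ineq (α : ℝ) {N : ℕ} (S : Finset (Fin N)) (c s : Fin N → ℝ)
    (hc : ∀ j ∈ S, c j < 1)
    (hmax : IsLocalMax (fun t => ∑ j ∈ S,
      (2 - 2 * (c j * Real.cos t + s j * Real.sin t)) ^ (-α/2 : ℝ)) 0) :
    ∑ j ∈ S, (α * (α+2) * s j ^ 2 * (2 - 2 * c j) ^ (-α/2-2 : ℝ)
      - α * c j * (2 - 2 * c j) ^ (-α/2-1 : ℝ)) ≤ 0 := by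
  have hψcont : ∀ j : Fin N, Continuous (fun t => 2 - 2*(c j * Real.cos t + s j * Real.sin t)) := by
    intro j; continuity
  have hψ0 : ∀ j ∈ S, 0 < 2 - 2*(c j * Real.cos 0 + s j * Real.sin 0) := by
    intro j hj
    have := hc j hj
    simp only [Real.cos_zero, Real.sin_zero, mul_one, mul_zero, add_zero]
    linarith
  have hevent : ∀ᶠ t in 𝓝 (0:ℝ), ∀ j ∈ S, 0 < 2 - 2*(c j * Real.cos t + s j * Real.sin t) := by
    rw [Filter.eventually_all_finset]
    intro j hj
    exact ((hψcont j).tendsto 0).eventually (eventually_gt_nhds (hψ0 j hj))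
  -- generic derivative facts
  have hφ : ∀ (j : Fin N) (t : ℝ), HasDerivAt (fun t => c j * Real.cos t + s j * Real.sin t)
      (s j * Real.cos t - c j * Real.sin t) t := by
    intro j t
    have h := ((Real.hasDerivAt_cos t).const_mul (c j)).fun_add ((Real.hasDerivAt_sin t).const_mul (s j))
    exact h.congr_deriv (by ring)
  have hψ : ∀ (j : Fin N) (t : ℝ), HasDerivAt (fun t => 2 - 2*(c j * Real.cos t + s j * Real.sin t))
      (-2 * (s j * Real.cos t - c j * Real.sin t)) t := by
    intro j t
    have h := ((hφ j t).const_mul (2:ℝ)).const_sub 2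
    exact h.congr_deriv (by ring)
  set F₁ : ℝ → ℝ := fun t => ∑ j ∈ S,
    ((-α/2) * (2 - 2*(c j * Real.cos t + s j * Real.sin t)) ^ (-α/2-1 : ℝ))
      * (-2 * (s j * Real.cos t - c j * Real.sin t)) with hF₁def
  have hFd : ∀ᶠ t in 𝓝 (0:ℝ), HasDerivAt (fun t => ∑ j ∈ S,
      (2 - 2 * (c j * Real.cos t + s j * Real.sin t)) ^ (-α/2 : ℝ)) (F₁ t) t := by
    filter_upwards [hevent] with t ht
    apply HasDerivAt.fun_sum
    intro j hj
    have hr := Real.hasDerivAt_rpow_const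
      (x := 2 - 2*(c j * Real.cos t + s j * Real.sin t)) (p := -α/2)
      (Or.inl (ne_of_gt (ht j hj)))
    exact hr.comp t (hψ j t)
  have hF₁d : HasDerivAt F₁ (∑ j ∈ S, (α * (α+2) * s j ^ 2 * (2 - 2 * c j) ^ (-α/2-2 : ℝ)
      - α * c j * (2 - 2 * c j) ^ (-α/2-1 : ℝ))) 0 := by
    rw [hF₁def]
    apply HasDerivAt.fun_sum
    intro j hj
    have hne : (2 - 2*(c j * Real.cos 0 + s j * Real.sin 0)) ≠ 0 := ne_of_gt (hψ0 j hj)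
    have hA : HasDerivAt (fun t => (-α/2) * (2 - 2*(c j * Real.cos t + s j * Real.sin t)) ^ (-α/2-1 : ℝ))
        ((-α/2) * (((-α/2-1) * (2 - 2*(c j * Real.cos 0 + s j * Real.sin 0)) ^ (-α/2-1-1 : ℝ)) *
          (-2 * (s j * Real.cos 0 - c j * Real.sin 0)))) 0 :=
      ((Real.hasDerivAt_rpow_const (p := -α/2-1) (Or.inl hne)).comp 0 (hψ j 0)).const_mul (-α/2)
    have hB : HasDerivAt (fun t => -2 * (s j * Real.cos t - c j * Real.sin t))
        (-2 * (s j * (-Real.sin 0) - c j * Real.cos 0)) 0 :=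
      (((Real.hasDerivAt_cos 0).const_mul (s j)).sub ((Real.hasDerivAt_sin 0).const_mul (c j))).const_mul (-2)
    have hAB := hA.mul hB
    refine hAB.congr_deriv ?_
    simp only [Real.cos_zero, Real.sin_zero, mul_one, mul_zero, add_zero, sub_zero, neg_zero, zero_sub, zero_mul]
    rw [show (-α/2-1-1 : ℝ) = -α/2-2 by ring]
    ring
  exact secondDerivTest hFd hF₁d hmax

lemma norm_sub_rpow {n : ℕ} (α : ℝ) (y z : EuclideanSpace ℝ (Fin n)) (hy : ‖y‖ = 1) (hz : ‖z‖ = 1) :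
    ‖y - z‖ ^ (-α) = (2 - 2 * ⟪y, z⟫) ^ (-α/2 : ℝ) := by
  have h2 : ‖y - z‖ ^ (2:ℕ) = 2 - 2 * ⟪y, z⟫ := by
    rw [@norm_sub_sq_real]; rw [hy, hz]; ring
  rw [← h2, ← Real.rpow_natCast (‖y - z‖) 2, ← Real.rpow_mul (norm_nonneg _)]
  ring_nf


set_option maxHeartbeats 1000000 in
/-- For `α ≥ d − 2`, the Riesz energy `E_α` has no local maximum on tuples of pairwise
distinct points of the sphere `S^d`. -/
theorem rieszEnergy_no_local_max (d N : ℕ) (hd : 1 ≤ d) (hN : 2 ≤ N)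
    (α : ℝ) (hα : 0 < α) (hαd : (d : ℝ) - 2 ≤ α) :
    ¬ ∃ (x : Fin N → Metric.sphere (0 : EuclideanSpace ℝ (Fin (d + 1))) 1)
        (U : Set (Fin N → Metric.sphere (0 : EuclideanSpace ℝ (Fin (d + 1))) 1)),
        Function.Injective x ∧ U ∈ nhds x ∧
        ∀ y ∈ U, Function.Injective y → rieszEnergy d N α y ≤ rieszEnergy d N α x := by
  rintro ⟨x, U, hinj, hU, hle⟩
  haveI : NeZero N := ⟨by omega⟩
  set E := EuclideanSpace ℝ (Fin (d + 1))
  have hxnorm : ∀ j, ‖(x j : E)‖ = 1 := fun j =>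
    mem_sphere_zero_iff_norm.1 (x j).2
  set P : E := (x 0 : E) with hPdef
  have hP : ‖P‖ = 1 := hxnorm 0
  set S : Finset (Fin N) := Finset.univ.erase (0 : Fin N) with hSdef
  have hSne : S.Nonempty := by
    refine ⟨⟨1, by omega⟩, Finset.mem_erase.2 ⟨?_, Finset.mem_univ _⟩⟩
    simp [Fin.ext_iff]
  set c : Fin N → ℝ := fun j => ⟪P, (x j : E)⟫ with hcdef
  have hxneP : ∀ j ∈ S, (x j : E) ≠ P := by
    intro j hj h
    exact (Finset.mem_erase.1 hj).1 (hinj (Subtype.ext h.symm).symm)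
  have hq : ∀ j ∈ S, ‖P - (x j : E)‖ ^ (2:ℕ) = 2 - 2 * c j := by
    intro j hj
    rw [@norm_sub_sq_real, hP, hxnorm j]; ring
  have hclt : ∀ j ∈ S, c j < 1 := by
    intro j hj
    have hne : P - (x j : E) ≠ 0 := sub_ne_zero.2 fun h => hxneP j hj h.symm
    have h1 : 0 < ‖P - (x j : E)‖ ^ (2:ℕ) := pow_pos (norm_pos_iff.2 hne) 2
    rw [hq j hj] at h1
    linarith
  have hcge : ∀ j, -1 ≤ c j := by
    intro j
    have := abs_real_inner_le_norm P (x j : E)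
    rw [hP, hxnorm j] at this
    have := abs_le.1 (by simpa using this)
    exact this.1
  -- orthonormal basis with b 0 = P
  obtain ⟨b, hb0⟩ : ∃ b : OrthonormalBasis (Fin (d + 1)) ℝ E, b 0 = P := by
    have horth : Orthonormal ℝ (Set.restrict {(0 : Fin (d+1))} (fun _ : Fin (d+1) => P)) := by
      constructor
      · intro i; exact hP
      · intro i j hij
        exact absurd (Subsingleton.elim i j) hij
    obtain ⟨b, hb⟩ := horth.exists_orthonormalBasis_extension_of_card_eq
      (by show Module.finrank ℝ (EuclideanSpace ℝ (Fin (d+1))) = Fintype.card (Fin (d+1))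
          simp [finrank_euclideanSpace_fin])
    exact ⟨b, hb 0 rfl⟩
  have hbP : ∀ i : Fin (d+1), i ≠ 0 → ⟪P, (b i : E)⟫ = 0 := by
    intro i hi
    rw [← hb0]
    simpa using b.orthonormal.2 (Ne.symm hi)
  have hbnorm : ∀ i : Fin (d+1), ‖(b i : E)‖ = 1 := fun i => b.orthonormal.1 i
  -- Parseval
  have hpars : ∀ j : Fin N,
      ∑ i ∈ Finset.univ.erase (0 : Fin (d+1)), ⟪(b i : E), (x j : E)⟫ ^ 2 = 1 - c j ^ 2 := by
    intro j
    have h := b.sum_inner_mul_inner (x j : E) (x j : E)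
    have h2 : ∑ i, ⟪(b i : E), (x j : E)⟫ ^ 2 = 1 := by
      calc ∑ i, ⟪(b i : E), (x j : E)⟫ ^ 2
          = ∑ i, ⟪(x j : E), (b i : E)⟫ * ⟪(b i : E), (x j : E)⟫ :=
            Finset.sum_congr rfl (fun i _ => by rw [real_inner_comm (x j : E) (b i : E)]; ring)
        _ = ⟪(x j : E), (x j : E)⟫ := h
        _ = 1 := by rw [real_inner_self_eq_norm_sq, hxnorm]; norm_num
    rw [← Finset.add_sum_erase Finset.univ _ (Finset.mem_univ (0 : Fin (d+1)))] at h2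
    rw [hb0] at h2
    linarith [h2]
  -- geometric core
  have hkey : ∀ v : E, ‖v‖ = 1 → ⟪P, v⟫ = 0 →
      ∑ j ∈ S, (α * (α+2) * (⟪v, (x j : E)⟫ : ℝ) ^ 2 * (2 - 2 * c j) ^ (-α/2-2 : ℝ)
        - α * c j * (2 - 2 * c j) ^ (-α/2-1 : ℝ)) ≤ 0 := by
    intro v hv hPv
    set sv : Fin N → ℝ := fun j => ⟪v, (x j : E)⟫ with hsvdef
    set γ : ℝ → E := fun t => Real.cos t • P + Real.sin t • v with hγdef
    have hγnorm : ∀ t, ‖γ t‖ = 1 := by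
      intro t
      have h2 : ‖γ t‖ ^ (2:ℕ) = (Real.cos t) ^ 2 + (Real.sin t) ^ 2 := by
        show ‖Real.cos t • P + Real.sin t • v‖ ^ (2:ℕ) = _
        rw [@norm_add_sq_real, norm_smul, norm_smul, real_inner_smul_left,
          real_inner_smul_right, hPv, hP, hv]
        simp [Real.norm_eq_abs, mul_pow, sq_abs]
      have h3 := Real.sin_sq_add_cos_sq t
      nlinarith [norm_nonneg (γ t)]
    have hγmem : ∀ t, γ t ∈ Metric.sphere (0:E) 1 := fun t =>
      mem_sphere_zero_iff_norm.2 (hγnorm t)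
    set y : ℝ → (Fin N → Metric.sphere (0:E) 1) :=
      fun t => Function.update x 0 ⟨γ t, hγmem t⟩ with hydef
    have hγ0 : γ 0 = P := by
      show Real.cos 0 • P + Real.sin 0 • v = P
      simp
    have hy00 : ∀ t, (y t 0 : E) = γ t := by
      intro t
      show ((Function.update x 0 ⟨γ t, hγmem t⟩ 0 : Metric.sphere (0:E) 1) : E) = γ t
      rw [Function.update_self]
    have hyj : ∀ (t : ℝ) (j : Fin N), j ≠ 0 → y t j = x j := by
      intro t j hj
      exact Function.update_of_ne hj _ x
    have hy0 : y 0 = x := by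
      funext i
      by_cases h : i = 0
      · subst h
        exact Subtype.ext ((hy00 0).trans hγ0)
      · exact hyj 0 i h
    have hinner : ∀ (t : ℝ) (j : Fin N), ⟪γ t, (x j : E)⟫ = c j * Real.cos t + sv j * Real.sin t := by
      intro t j
      show ⟪Real.cos t • P + Real.sin t • v, (x j : E)⟫ = _
      rw [inner_add_left, real_inner_smul_left, real_inner_smul_left]
      simp only [hcdef, hsvdef]
      ring
    have hterm : ∀ (t : ℝ), ∀ j ∈ S, ‖γ t - (x j : E)‖ ^ (-α)
        = (2 - 2 * (c j * Real.cos t + sv j * Real.sin t)) ^ (-α/2 : ℝ) := by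
      intro t j hj
      rw [norm_sub_rpow α (γ t) (x j : E) (hγnorm t) (hxnorm j), hinner t j]
    set C : ℝ := ∑ i ∈ S, ∑ j ∈ S.erase i, ‖(x i : E) - (x j : E)‖ ^ (-α) with hCdef
    have heraseswap : ∀ i : Fin N, (Finset.univ.erase i).erase (0 : Fin N) = S.erase i := by
      intro i
      rw [hSdef]
      ext a
      simp only [Finset.mem_erase, Finset.mem_univ, and_true]
      tauto
    have hEt : ∀ t, rieszEnergy d N α (y t)
        = 2 * (∑ j ∈ S, (2 - 2 * (c j * Real.cos t + sv j * Real.sin t)) ^ (-α/2 : ℝ)) + C := by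
      intro t
      have hfil : ∀ i : Fin N, (Finset.univ.filter (· ≠ i)) = Finset.univ.erase i :=
        fun i => Finset.filter_ne' _ _
      simp only [rieszEnergy, hfil]
      rw [← Finset.add_sum_erase Finset.univ _ (Finset.mem_univ (0 : Fin N))]
      have h1 : ∑ j ∈ Finset.univ.erase (0 : Fin N), ‖(y t 0 : E) - (y t j : E)‖ ^ (-α)
          = ∑ j ∈ S, (2 - 2 * (c j * Real.cos t + sv j * Real.sin t)) ^ (-α/2 : ℝ) := by
        rw [← hSdef]
        refine Finset.sum_congr rfl (fun j hj => ?_)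
        rw [hy00 t, hyj t j (Finset.mem_erase.1 hj).1, hterm t j hj]
      have h2 : ∀ i ∈ Finset.univ.erase (0 : Fin N),
          ∑ j ∈ Finset.univ.erase i, ‖(y t i : E) - (y t j : E)‖ ^ (-α)
          = (2 - 2 * (c i * Real.cos t + sv i * Real.sin t)) ^ (-α/2 : ℝ)
            + ∑ j ∈ S.erase i, ‖(x i : E) - (x j : E)‖ ^ (-α) := by
        intro i hi
        have hi0 : (0 : Fin N) ∈ Finset.univ.erase i :=
          Finset.mem_erase.2 ⟨Ne.symm (Finset.mem_erase.1 hi).1, Finset.mem_univ _⟩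
        rw [← Finset.add_sum_erase _ _ hi0]
        have hiS : i ∈ S := by rw [hSdef]; exact hi
        congr 1
        · rw [hy00 t, hyj t i (Finset.mem_erase.1 hi).1, norm_sub_rev, hterm t i hiS]
        · rw [heraseswap i]
          refine Finset.sum_congr rfl (fun j hj => ?_)
          rw [hyj t i (Finset.mem_erase.1 hi).1,
            hyj t j (Finset.mem_erase.1 (Finset.mem_of_mem_erase hj)).1]
      rw [h1, Finset.sum_congr rfl h2, Finset.sum_add_distrib, ← hSdef, ← hCdef]
      ring
    -- continuity & injectivity
    have hγcont : Continuous γ := by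
      show Continuous fun t => Real.cos t • P + Real.sin t • v
      exact (Real.continuous_cos.smul continuous_const).add
        (Real.continuous_sin.smul continuous_const)
    have hycont : Continuous y := by
      apply continuous_pi
      intro i
      by_cases h : i = 0
      · subst h
        simp only [hydef, Function.update_self]
        exact Continuous.subtype_mk hγcont _
      · simp only [hydef, Function.update_of_ne h]
        exact continuous_const
    have hyU : ∀ᶠ t in 𝓝 (0:ℝ), y t ∈ U := by
      have h := hycont.tendsto 0
      rw [hy0] at h
      exact h hU
    have hinj_ev : ∀ᶠ t in 𝓝 (0:ℝ), Function.Injective (y t) := by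
      have hev : ∀ᶠ t in 𝓝 (0:ℝ), ∀ j ∈ S, γ t ≠ (x j : E) := by
        rw [Filter.eventually_all_finset]
        intro j hj
        have ht : Filter.Tendsto γ (𝓝 0) (𝓝 P) := by
          have := hγcont.tendsto 0
          rwa [hγ0] at this
        exact ht.eventually_ne (Ne.symm (hxneP j hj))
      filter_upwards [hev] with t ht
      intro a b' hab
      by_cases ha : a = 0 <;> by_cases hb : b' = 0
      · rw [ha, hb]
      · exfalso
        apply ht b' (by rw [hSdef]; exact Finset.mem_erase.2 ⟨hb, Finset.mem_univ _⟩)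
        subst ha
        have := congrArg Subtype.val hab
        rw [hy00 t] at this
        rw [this, hyj t b' hb]
      · exfalso
        apply ht a (by rw [hSdef]; exact Finset.mem_erase.2 ⟨ha, Finset.mem_univ _⟩)
        subst hb
        have := congrArg Subtype.val hab.symm
        rw [hy00 t] at this
        rw [this, hyj t a ha]
      · rw [hyj t a ha, hyj t b' hb] at hab
        exact hinj hab
    have hmaxE : IsLocalMax (fun t => rieszEnergy d N α (y t)) 0 := by
      filter_upwards [hyU, hinj_ev] with t h1 h2
      show rieszEnergy d N α (y t) ≤ rieszEnergy d N α (y 0)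
      rw [hy0]
      exact hle (y t) h1 h2
    have hmaxF : IsLocalMax (fun t => ∑ j ∈ S,
        (2 - 2 * (c j * Real.cos t + sv j * Real.sin t)) ^ (-α/2 : ℝ)) 0 := by
      filter_upwards [hmaxE] with t ht
      have h1 := hEt t
      have h2 := hEt 0
      rw [h1, h2] at ht
      linarith
    exact key_ineq α S c sv hclt hmaxF
  -- summation and contradiction
  have hsumle : ∑ i ∈ Finset.univ.erase (0 : Fin (d+1)), ∑ j ∈ S,
      (α * (α+2) * (⟪(b i : E), (x j : E)⟫ : ℝ) ^ 2 * (2 - 2 * c j) ^ (-α/2-2 : ℝ)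
        - α * c j * (2 - 2 * c j) ^ (-α/2-1 : ℝ)) ≤ 0 :=
    Finset.sum_nonpos (fun i hi => hkey (b i) (hbnorm i) (hbP i (Finset.mem_erase.1 hi).1))
  have hcard : (Finset.univ.erase (0 : Fin (d+1))).card = d := by
    simp [Finset.card_erase_of_mem]
  have hinnersum : ∀ j ∈ S, ∑ i ∈ Finset.univ.erase (0 : Fin (d+1)),
      (α * (α+2) * (⟪(b i : E), (x j : E)⟫ : ℝ) ^ 2 * (2 - 2 * c j) ^ (-α/2-2 : ℝ)
        - α * c j * (2 - 2 * c j) ^ (-α/2-1 : ℝ))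
      = α * (α+2) * (1 - c j ^ 2) * (2 - 2 * c j) ^ (-α/2-2 : ℝ)
        - (d : ℝ) * (α * c j * (2 - 2 * c j) ^ (-α/2-1 : ℝ)) := by
    intro j hj
    rw [Finset.sum_sub_distrib]
    congr 1
    · calc ∑ i ∈ Finset.univ.erase (0 : Fin (d+1)),
          α * (α+2) * (⟪(b i : E), (x j : E)⟫ : ℝ) ^ 2 * (2 - 2 * c j) ^ (-α/2-2 : ℝ)
          = ∑ i ∈ Finset.univ.erase (0 : Fin (d+1)),
            (⟪(b i : E), (x j : E)⟫ : ℝ) ^ 2 * (α * (α+2) * (2 - 2 * c j) ^ (-α/2-2 : ℝ)) :=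
            Finset.sum_congr rfl (fun i _ => by ring)
        _ = (1 - c j ^ 2) * (α * (α+2) * (2 - 2 * c j) ^ (-α/2-2 : ℝ)) := by
            rw [← Finset.sum_mul, hpars j]
        _ = α * (α+2) * (1 - c j ^ 2) * (2 - 2 * c j) ^ (-α/2-2 : ℝ) := by ring
    · rw [Finset.sum_const, hcard, nsmul_eq_mul]
  have hpos : ∀ j ∈ S, 0 < α * (α+2) * (1 - c j ^ 2) * (2 - 2 * c j) ^ (-α/2-2 : ℝ)
      - (d : ℝ) * (α * c j * (2 - 2 * c j) ^ (-α/2-1 : ℝ)) := by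
    intro j hj
    have hc1 : c j < 1 := hclt j hj
    have hc2 : -1 ≤ c j := hcge j
    have hqpos : (0:ℝ) < 2 - 2 * c j := by linarith
    have hde : (1:ℝ) ≤ (d:ℝ) := by exact_mod_cast hd
    have hA : 0 < (2 - 2 * c j) ^ (-α/2-2 : ℝ) := Real.rpow_pos_of_pos hqpos _
    have hBeq : (2 - 2 * c j) ^ (-α/2-1 : ℝ) = (2 - 2 * c j) ^ (-α/2-2 : ℝ) * (2 - 2 * c j) := by
      rw [show (-α/2-1 : ℝ) = (-α/2-2) + 1 by ring, Real.rpow_add_one (ne_of_gt hqpos)]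
    have hfac : 0 < (α+2) * (1 - c j ^ 2) - (d:ℝ) * (c j * (2 - 2 * c j)) := by
      have ha := mul_pos (mul_pos (show (0:ℝ) < 1 - c j by linarith)
        (show (0:ℝ) < 1 - c j by linarith)) (show (0:ℝ) < (d:ℝ) by linarith)
      have hb := mul_nonneg (mul_nonneg (show (0:ℝ) ≤ 1 - c j by linarith)
        (show (0:ℝ) ≤ 1 + c j by linarith)) (show (0:ℝ) ≤ α - (d:ℝ) + 2 by linarith)
      nlinarith [ha, hb]
    rw [hBeq]
    have hkey2 : α * (α+2) * (1 - c j ^ 2) * (2 - 2 * c j) ^ (-α/2-2 : ℝ)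
        - (d : ℝ) * (α * c j * ((2 - 2 * c j) ^ (-α/2-2 : ℝ) * (2 - 2 * c j)))
        = α * (((α+2) * (1 - c j ^ 2) - (d:ℝ) * (c j * (2 - 2 * c j)))
            * (2 - 2 * c j) ^ (-α/2-2 : ℝ)) := by ring
    rw [hkey2]
    exact mul_pos hα (mul_pos hfac hA)
  have hfinal : 0 < ∑ j ∈ S, (α * (α+2) * (1 - c j ^ 2) * (2 - 2 * c j) ^ (-α/2-2 : ℝ)
      - (d : ℝ) * (α * c j * (2 - 2 * c j) ^ (-α/2-1 : ℝ))) := Finset.sum_pos hpos hSne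
  rw [Finset.sum_comm] at hsumle
  rw [Finset.sum_congr rfl hinnersum] at hsumle
  linarith
end

section
/- Let d, N be natural numbers with d ≥ 1 and N ≥ 2, let α be a real number with α > 0 and α ≥ d − 2, set r = α/2 and g_r(t) = (1−t)^{−r}. Then for every tuple of pairwise distinct points x_1,…,x_N ∈ S^d, there exists a unit vector h ∈ ℝ^{d+1} with ⟨x_1, h⟩ = 0 such that ∑_{j=2}^{N} [ g_r''(⟨x_1,x_j⟩)·⟨x_j,h⟩² − g_r'(⟨x_1,x_j⟩)·⟨x_1,x_j⟩ ] > 0. -/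
open scoped RealInnerProductSpace
open Finset

/-- For `α ≥ d − 2`, `r = α/2` and `g_r(t) = (1−t)^{−r}` (so `g_r'(t) = r(1−t)^{−r−1}` and
`g_r''(t) = r(r+1)(1−t)^{−r−2}`), for every tuple of pairwise distinct points
`x_1,…,x_N ∈ S^d` there is a unit vector `h ⟂ x₁` with
`∑_{j=2}^{N} [g_r''(⟨x₁,x_j⟩)·⟨x_j,h⟩² − g_r'(⟨x₁,x_j⟩)·⟨x₁,x_j⟩] > 0`. -/
theorem exists_direction_positive_second_variation (d N : ℕ) (hd : 1 ≤ d) (hN : 2 ≤ N)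
    (α : ℝ) (hα : 0 < α) (hαd : (d : ℝ) - 2 ≤ α)
    (x : Fin N → EuclideanSpace ℝ (Fin (d + 1))) (hx : ∀ i, ‖x i‖ = 1)
    (hinj : Function.Injective x) :
    ∃ h : EuclideanSpace ℝ (Fin (d + 1)), ‖h‖ = 1 ∧ ⟪x ⟨0, by omega⟩, h⟫ = 0 ∧
      0 < ∑ j ∈ Finset.univ.filter (· ≠ (⟨0, by omega⟩ : Fin N)),
        ((α / 2) * (α / 2 + 1) * (1 - ⟪x ⟨0, by omega⟩, x j⟫) ^ (-(α / 2) - 2) * ⟪x j, h⟫ ^ 2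
          - (α / 2) * (1 - ⟪x ⟨0, by omega⟩, x j⟫) ^ (-(α / 2) - 1) * ⟪x ⟨0, by omega⟩, x j⟫) := by
  set z : Fin N := ⟨0, by omega⟩ with hz
  -- extend x z to an orthonormal basis
  have hcard : Module.finrank ℝ (EuclideanSpace ℝ (Fin (d + 1)))
      = Fintype.card (Fin (d + 1)) := by simp
  have horth : Orthonormal ℝ
      (Set.restrict {(0 : Fin (d+1))} (fun _ => x z)) := by
    rw [orthonormal_iff_ite]
    rintro ⟨i, hi⟩ ⟨j, hj⟩
    simp only [Set.mem_singleton_iff] at hi hj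
    subst hi; subst hj
    have h1 : ⟪x z, x z⟫ = 1 := by
      rw [real_inner_self_eq_norm_sq, hx z]; norm_num
    rw [if_pos rfl]; exact h1
  obtain ⟨b, hb⟩ := horth.exists_orthonormalBasis_extension_of_card_eq hcard
  have hb0 : b 0 = x z := hb 0 rfl
  set t : Fin N → ℝ := fun j => ⟪x z, x j⟫ with ht
  set S : EuclideanSpace ℝ (Fin (d + 1)) → ℝ := fun h =>
      ∑ j ∈ Finset.univ.filter (· ≠ z),
        ((α / 2) * (α / 2 + 1) * (1 - t j) ^ (-(α / 2) - 2) * ⟪x j, h⟫ ^ 2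
          - (α / 2) * (1 - t j) ^ (-(α / 2) - 1) * t j) with hS
  -- Parseval
  have parseval : ∀ j, ∑ k ∈ Finset.univ.erase (0 : Fin (d+1)), ⟪x j, b k⟫ ^ 2
      = 1 - (t j) ^ 2 := by
    intro j
    have h1 : ∑ k, ⟪x j, b k⟫ ^ 2 = 1 := by
      have h0 := b.sum_inner_mul_inner (x j) (x j)
      rw [real_inner_self_eq_norm_sq, hx j, one_pow] at h0
      rw [← h0]
      refine Finset.sum_congr rfl fun k _ => ?_
      rw [sq]; congr 1; exact real_inner_comm _ _
    have h2 : ⟪x j, b 0⟫ ^ 2 + ∑ k ∈ Finset.univ.erase (0 : Fin (d+1)), ⟪x j, b k⟫ ^ 2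
        = ∑ k, ⟪x j, b k⟫ ^ 2 :=
      Finset.add_sum_erase Finset.univ (fun k => ⟪x j, b k⟫ ^ 2) (Finset.mem_univ 0)
    rw [h1, hb0] at h2
    have h3 : ⟪x j, x z⟫ = t j := real_inner_comm _ _
    rw [h3] at h2
    linarith
  -- bounds on t j
  have htlt : ∀ j, j ≠ z → t j < 1 := by
    intro j hj
    exact (inner_lt_one_iff_real_of_norm_eq_one (hx z) (hx j)).mpr
      (fun h => hj (hinj h).symm)
  have htge : ∀ j, -1 ≤ t j := by
    intro j
    have h0 := abs_real_inner_le_norm (x z) (x j)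
    rw [hx z, hx j] at h0
    have h1 := abs_le.mp (by simpa using h0)
    exact h1.1
  -- sum of S over tangent basis vectors is positive
  have key : 0 < ∑ k ∈ Finset.univ.erase (0 : Fin (d+1)), S (b k) := by
    have hswap : ∑ k ∈ Finset.univ.erase (0 : Fin (d+1)), S (b k)
        = ∑ j ∈ Finset.univ.filter (· ≠ z),
          ((α / 2) * (α / 2 + 1) * (1 - t j) ^ (-(α / 2) - 2) * (1 - (t j)^2)
            - (d : ℝ) * ((α / 2) * (1 - t j) ^ (-(α / 2) - 1) * t j)) := by
      simp only [hS]
      rw [Finset.sum_comm]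
      refine Finset.sum_congr rfl fun j hj => ?_
      rw [Finset.sum_sub_distrib, ← Finset.mul_sum, parseval j, Finset.sum_const,
        Finset.card_erase_of_mem (Finset.mem_univ _), Finset.card_univ, Fintype.card_fin,
        Nat.add_sub_cancel, nsmul_eq_mul]
    rw [hswap]
    apply Finset.sum_pos
    · intro j hj
      have hj' : j ≠ z := by simpa using hj
      have h1 : t j < 1 := htlt j hj'
      have h2 : -1 ≤ t j := htge j
      have hpos : (0:ℝ) < 1 - t j := by linarith
      have hp2 : (0:ℝ) < (1 - t j) ^ (-(α / 2) - 2) := Real.rpow_pos_of_pos hpos _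
      have hrel : (1 - t j) ^ (-(α / 2) - 1) = (1 - t j) ^ (-(α / 2) - 2) * (1 - t j) := by
        rw [← Real.rpow_add_one hpos.ne']
        ring_nf
      rw [hrel]
      have hd2 : (d : ℝ) / 2 ≤ α / 2 + 1 := by linarith
      have hdpos : (0:ℝ) < d := by exact_mod_cast hd
      have hfac : 0 < (α / 2 + 1) * (1 + t j) - (d:ℝ) * t j := by
        nlinarith [mul_le_mul_of_nonneg_right hd2 (by linarith : (0:ℝ) ≤ 1 + t j)]
      nlinarith [mul_pos (mul_pos (half_pos hα) hp2) (mul_pos hpos hfac)]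
    · refine ⟨⟨1, by omega⟩, ?_⟩
      simp [hz, Fin.ext_iff]
  obtain ⟨k, hk, hkpos⟩ : ∃ k ∈ Finset.univ.erase (0 : Fin (d+1)), 0 < S (b k) := by
    by_contra hcon
    push_neg at hcon
    have : ∑ k ∈ Finset.univ.erase (0 : Fin (d+1)), S (b k) ≤ 0 :=
      Finset.sum_nonpos fun k hk => hcon k hk
    linarith
  have hk0 : k ≠ 0 := Finset.ne_of_mem_erase hk
  have hperp : ⟪x z, b k⟫ = 0 := by
    have h0 : ⟪b 0, b k⟫ = 0 := b.orthonormal.2 (Ne.symm hk0)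
    rwa [hb0] at h0
  refine ⟨b k, b.orthonormal.1 k, hperp, ?_⟩
  simpa [hS, ht] using hkpos
end

section
/- Let d, N be natural numbers with d ≥ 1 and N ≥ 2, let α > 0, set r = α/2, and let x_1,…,x_N ∈ S^d be pairwise distinct, with h_1,…,h_N ∈ ℝ^{d+1} satisfying ⟨x_i, h_i⟩ = 0 for each i. Define f(t) = ∑_{i≠j} g_r( ⟨ (x_i + t·h_i)/‖x_i + t·h_i‖, (x_j + t·h_j)/‖x_j + t·h_j‖ ⟩ ) for t in a neighborhood of 0, where g_r(t) = (1−t)^{−r}. Then f is twice differentiable at 0 and f''(0) = ∑_{i≠j} [ g_r''(⟨x_i,x_j⟩)·(⟨x_i,h_j⟩ + ⟨x_j,h_i⟩)² + g_r'(⟨x_i,x_j⟩)·( 2⟨h_i,h_j⟩ − (‖h_i‖² + ‖h_j‖²)·⟨x_i,x_j⟩ ) ]. -/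
open scoped RealInnerProductSpace


noncomputable def auxQ (c0 c1 c2 t : ℝ) : ℝ := c0 + (c1 * t + c2 * t ^ 2)
noncomputable def auxP (bi bj t : ℝ) : ℝ := (1 + bi * t ^ 2) * (1 + bj * t ^ 2)
noncomputable def auxP' (bi bj t : ℝ) : ℝ :=
  2 * bi * t * (1 + bj * t ^ 2) + (1 + bi * t ^ 2) * (2 * bj * t)
noncomputable def auxG (c0 c1 c2 bi bj t : ℝ) : ℝ :=
  auxQ c0 c1 c2 t * auxP bi bj t ^ (-(1:ℝ)/2)
noncomputable def auxG' (c0 c1 c2 bi bj t : ℝ) : ℝ :=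
  (c1 + 2 * c2 * t) * auxP bi bj t ^ (-(1:ℝ)/2)
  + auxQ c0 c1 c2 t * (auxP' bi bj t * (-(1:ℝ)/2) * auxP bi bj t ^ (-(1:ℝ)/2 - 1))
noncomputable def auxD (r c0 c1 c2 bi bj t : ℝ) : ℝ :=
  r * ((1 - auxG c0 c1 c2 bi bj t) ^ (-r - 1) * auxG' c0 c1 c2 bi bj t)

lemma auxP_pos {bi bj : ℝ} (hbi : 0 ≤ bi) (hbj : 0 ≤ bj) (t : ℝ) : 0 < auxP bi bj t := by
  unfold auxP; positivity

lemma hasDerivAt_auxQ (c0 c1 c2 t : ℝ) :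
    HasDerivAt (fun s => auxQ c0 c1 c2 s) (c1 + 2 * c2 * t) t := by
  unfold auxQ
  have h1 : HasDerivAt (fun s : ℝ => c1 * s) c1 t := by
    simpa using (hasDerivAt_id t).const_mul c1
  have h2 : HasDerivAt (fun s : ℝ => c2 * s ^ 2) (2 * c2 * t) t := by
    have := (hasDerivAt_pow 2 t).const_mul c2
    exact this.congr_deriv (by push_cast; ring)
  exact ((h1.add h2).const_add c0).congr_deriv (by ring)

lemma hasDerivAt_auxP (bi bj t : ℝ) :
    HasDerivAt (fun s => auxP bi bj s) (auxP' bi bj t) t := by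
  unfold auxP auxP'
  have h1 : HasDerivAt (fun s : ℝ => 1 + bi * s ^ 2) (2 * bi * t) t := by
    have := ((hasDerivAt_pow 2 t).const_mul bi).const_add 1
    exact this.congr_deriv (by push_cast; ring)
  have h2 : HasDerivAt (fun s : ℝ => 1 + bj * s ^ 2) (2 * bj * t) t := by
    have := ((hasDerivAt_pow 2 t).const_mul bj).const_add 1
    exact this.congr_deriv (by push_cast; ring)
  exact (h1.mul h2).congr_deriv (by ring)

lemma hasDerivAt_auxG {bi bj : ℝ} (hbi : 0 ≤ bi) (hbj : 0 ≤ bj) (c0 c1 c2 t : ℝ) :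
    HasDerivAt (fun s => auxG c0 c1 c2 bi bj s) (auxG' c0 c1 c2 bi bj t) t := by
  unfold auxG auxG'
  have hW : HasDerivAt (fun s => auxP bi bj s ^ (-(1:ℝ)/2))
      (auxP' bi bj t * (-(1:ℝ)/2) * auxP bi bj t ^ (-(1:ℝ)/2 - 1)) t :=
    (hasDerivAt_auxP bi bj t).rpow_const (Or.inl (auxP_pos hbi hbj t).ne')
  exact ((hasDerivAt_auxQ c0 c1 c2 t).mul hW).congr_deriv (by ring)

lemma auxG_zero (c0 c1 c2 bi bj : ℝ) : auxG c0 c1 c2 bi bj 0 = c0 := by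
  simp [auxG, auxQ, auxP]

lemma auxG'_zero (c0 c1 c2 bi bj : ℝ) : auxG' c0 c1 c2 bi bj 0 = c1 := by
  simp [auxG', auxQ, auxP, auxP']

lemma hasDerivAt_phi {bi bj : ℝ} (hbi : 0 ≤ bi) (hbj : 0 ≤ bj) (r c0 c1 c2 t : ℝ)
    (hne : 1 - auxG c0 c1 c2 bi bj t ≠ 0) :
    HasDerivAt (fun s => (1 - auxG c0 c1 c2 bi bj s) ^ (-r))
      (auxD r c0 c1 c2 bi bj t) t := by
  have hG := hasDerivAt_auxG hbi hbj c0 c1 c2 t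
  have h := (hG.const_sub 1).rpow_const (p := -r) (Or.inl hne)
  exact h.congr_deriv (by unfold auxD; ring)

lemma aux1 {bi bj : ℝ} (hbi : 0 ≤ bi) (hbj : 0 ≤ bj) (r c0 c1 c2 : ℝ) (hc0 : c0 < 1) :
    ∀ᶠ t in nhds (0:ℝ), HasDerivAt (fun s => (1 - auxG c0 c1 c2 bi bj s) ^ (-r))
      (auxD r c0 c1 c2 bi bj t) t := by
  have hcont : ContinuousAt (fun t => 1 - auxG c0 c1 c2 bi bj t) 0 :=
    continuousAt_const.sub (hasDerivAt_auxG hbi hbj c0 c1 c2 0).continuousAt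
  have h0 : (0:ℝ) < 1 - auxG c0 c1 c2 bi bj 0 := by
    rw [auxG_zero]; linarith
  have hev : ∀ᶠ t in nhds (0:ℝ), 0 < 1 - auxG c0 c1 c2 bi bj t :=
    hcont.eventually (p := fun y => 0 < y) (eventually_gt_nhds h0)
  exact hev.mono fun t ht => hasDerivAt_phi hbi hbj r c0 c1 c2 t ht.ne'

lemma aux2 {bi bj : ℝ} (hbi : 0 ≤ bi) (hbj : 0 ≤ bj) (r c0 c1 c2 : ℝ) (hc0 : c0 < 1) :
    HasDerivAt (fun t => auxD r c0 c1 c2 bi bj t)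
      (r * (r + 1) * (1 - c0) ^ (-r - 2) * c1 ^ 2
        + r * (1 - c0) ^ (-r - 1) * (2 * c2 - c0 * (bi + bj))) 0 := by
  have hne : (1:ℝ) - c0 ≠ 0 := by linarith
  -- derivative of G' at 0
  have hA : HasDerivAt (fun t : ℝ => c1 + 2 * c2 * t) (2 * c2) 0 := by
    simpa using ((hasDerivAt_id (0:ℝ)).const_mul (2 * c2)).const_add c1
  have hW : HasDerivAt (fun t => auxP bi bj t ^ (-(1:ℝ)/2)) 0 0 := by
    have := (hasDerivAt_auxP bi bj 0).rpow_const (p := -(1:ℝ)/2)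
      (Or.inl (auxP_pos hbi hbj 0).ne')
    exact this.congr_deriv (by simp [auxP'])
  have hW2 : HasDerivAt (fun t => auxP bi bj t ^ (-(1:ℝ)/2 - 1)) 0 0 := by
    have := (hasDerivAt_auxP bi bj 0).rpow_const (p := -(1:ℝ)/2 - 1)
      (Or.inl (auxP_pos hbi hbj 0).ne')
    exact this.congr_deriv (by simp [auxP'])
  have hP' : HasDerivAt (fun t => auxP' bi bj t) (2 * bi + 2 * bj) 0 := by
    unfold auxP'
    have h1 : HasDerivAt (fun t : ℝ => 2 * bi * t) (2 * bi) 0 := by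
      simpa using (hasDerivAt_id (0:ℝ)).const_mul (2 * bi)
    have h2 : HasDerivAt (fun t : ℝ => 1 + bj * t ^ 2) 0 0 := by
      have := ((hasDerivAt_pow 2 (0:ℝ)).const_mul bj).const_add 1
      exact this.congr_deriv (by simp)
    have h3 : HasDerivAt (fun t : ℝ => 1 + bi * t ^ 2) 0 0 := by
      have := ((hasDerivAt_pow 2 (0:ℝ)).const_mul bi).const_add 1
      exact this.congr_deriv (by simp)
    have h4 : HasDerivAt (fun t : ℝ => 2 * bj * t) (2 * bj) 0 := by
      simpa using (hasDerivAt_id (0:ℝ)).const_mul (2 * bj)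
    exact ((h1.mul h2).add (h3.mul h4)).congr_deriv (by simp)
  have hZ : HasDerivAt
      (fun t => auxP' bi bj t * (-(1:ℝ)/2) * auxP bi bj t ^ (-(1:ℝ)/2 - 1))
      (-(bi + bj)) 0 := by
    have := ((hP'.mul_const (-(1:ℝ)/2)).mul hW2)
    exact this.congr_deriv (by simp [auxP, auxP']; ring)
  have hQ0 : HasDerivAt (fun t => auxQ c0 c1 c2 t) c1 0 := by
    have := hasDerivAt_auxQ c0 c1 c2 0
    exact this.congr_deriv (by ring)
  have hG'0 : HasDerivAt (fun t => auxG' c0 c1 c2 bi bj t) (2 * c2 - c0 * (bi + bj)) 0 := by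
    unfold auxG'
    have := (hA.mul hW).add (hQ0.mul hZ)
    exact this.congr_deriv (by simp [auxQ, auxP, auxP']; ring)
  have hG0 : HasDerivAt (fun t => auxG c0 c1 c2 bi bj t) c1 0 := by
    have := hasDerivAt_auxG hbi hbj c0 c1 c2 0
    rwa [auxG'_zero] at this
  have h1 : HasDerivAt (fun t => (1 - auxG c0 c1 c2 bi bj t) ^ (-r - 1))
      ((r + 1) * (1 - c0) ^ (-r - 2) * c1) 0 := by
    have := (hG0.const_sub 1).rpow_const (p := -r - 1)
      (Or.inl (by rw [auxG_zero]; exact hne))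
    refine this.congr_deriv ?_
    rw [auxG_zero, show (-r - 1 - 1 : ℝ) = -r - 2 by ring]
    ring
  have := ((h1.mul hG'0).const_mul r)
  refine this.congr_deriv ?_
  rw [auxG_zero, auxG'_zero]
  ring

/-- Second variation of the rescaled energy `∑_{i≠j} g_r(⟨x_i,x_j⟩)`, `g_r(t) = (1−t)^{−r}`,
`r = α/2`, along tangent perturbations `h_i ⟂ x_i`: with
`f(t) = ∑_{i≠j} g_r(⟨(x_i+t·h_i)/‖x_i+t·h_i‖, (x_j+t·h_j)/‖x_j+t·h_j‖⟩)`, `f` is twice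
differentiable at `0` and
`f''(0) = ∑_{i≠j} [g_r''(⟨x_i,x_j⟩)·(⟨x_i,h_j⟩+⟨x_j,h_i⟩)²
  + g_r'(⟨x_i,x_j⟩)·(2⟨h_i,h_j⟩ − (‖h_i‖²+‖h_j‖²)·⟨x_i,x_j⟩)]`. -/
theorem second_derivative_energy_variation (d N : ℕ) (hd : 1 ≤ d) (hN : 2 ≤ N)
    (α : ℝ) (hα : 0 < α)
    (x : Fin N → EuclideanSpace ℝ (Fin (d + 1))) (hx : ∀ i, ‖x i‖ = 1)
    (hinj : Function.Injective x)
    (h : Fin N → EuclideanSpace ℝ (Fin (d + 1))) (hh : ∀ i, ⟪x i, h i⟫ = 0)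
    (f : ℝ → ℝ)
    (hf : f = fun t =>
      ∑ i, ∑ j ∈ Finset.univ.filter (· ≠ i),
        (1 - ⟪(‖x i + t • h i‖)⁻¹ • (x i + t • h i),
              (‖x j + t • h j‖)⁻¹ • (x j + t • h j)⟫) ^ (-(α / 2))) :
    (∀ᶠ t in nhds (0 : ℝ), DifferentiableAt ℝ f t) ∧
    HasDerivAt (deriv f)
      (∑ i, ∑ j ∈ Finset.univ.filter (· ≠ i),
        ((α / 2) * (α / 2 + 1) * (1 - ⟪x i, x j⟫) ^ (-(α / 2) - 2)
            * (⟪x i, h j⟫ + ⟪x j, h i⟫) ^ 2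
          + (α / 2) * (1 - ⟪x i, x j⟫) ^ (-(α / 2) - 1)
            * (2 * ⟪h i, h j⟫ - (‖h i‖ ^ 2 + ‖h j‖ ^ 2) * ⟪x i, x j⟫))) 0 := by
  set c0 : Fin N → Fin N → ℝ := fun i j => ⟪x i, x j⟫ with hc0def
  set c1 : Fin N → Fin N → ℝ := fun i j => ⟪x i, h j⟫ + ⟪h i, x j⟫ with hc1def
  set c2 : Fin N → Fin N → ℝ := fun i j => ⟪h i, h j⟫ with hc2def
  set b : Fin N → ℝ := fun i => ‖h i‖ ^ 2 with hbdef
  have hb : ∀ i, 0 ≤ b i := fun i => sq_nonneg _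
  have hc0lt : ∀ i j, j ≠ i → c0 i j < 1 := by
    intro i j hij
    have hne : x i - x j ≠ 0 := sub_ne_zero.mpr (fun e => hij (hinj e).symm)
    have h2 : 0 < ‖x i - x j‖ ^ 2 := pow_pos (norm_pos_iff.mpr hne) 2
    rw [norm_sub_sq_real, hx i, hx j] at h2
    simp only [hc0def]
    nlinarith
  -- pointwise identity for f
  have hF : f = fun t => ∑ i, ∑ j ∈ Finset.univ.filter (· ≠ i),
      (1 - auxG (c0 i j) (c1 i j) (c2 i j) (b i) (b j) t) ^ (-(α / 2)) := by
    rw [hf]; funext t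
    refine Finset.sum_congr rfl fun i _ => Finset.sum_congr rfl fun j _ => ?_
    have hni : ∀ k, ‖x k + t • h k‖ = Real.sqrt (1 + b k * t ^ 2) := by
      intro k
      rw [show (1 + b k * t ^ 2) = ‖x k + t • h k‖ ^ 2 by
        rw [norm_add_sq_real, real_inner_smul_right, hh k, hx k, norm_smul]
        simp [mul_pow, sq_abs, hbdef]
        ring]
      exact (Real.sqrt_sq (norm_nonneg _)).symm
    have hq : ⟪x i + t • h i, x j + t • h j⟫
        = c0 i j + (c1 i j * t + c2 i j * t ^ 2) := by
      rw [inner_add_left, inner_add_right, inner_add_right, real_inner_smul_left,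
        real_inner_smul_left, real_inner_smul_right, real_inner_smul_right]
      simp only [hc0def, hc1def, hc2def]
      ring
    have hs : ∀ k, (0:ℝ) < 1 + b k * t ^ 2 := by
      intro k; have := hb k; positivity
    have hinv : (Real.sqrt (1 + b i * t ^ 2))⁻¹ * (Real.sqrt (1 + b j * t ^ 2))⁻¹
        = ((1 + b i * t ^ 2) * (1 + b j * t ^ 2)) ^ (-(1:ℝ)/2) := by
      rw [← mul_inv, ← Real.sqrt_mul (hs i).le,
        show (-(1:ℝ)/2) = -(1/2:ℝ) by norm_num,
        Real.rpow_neg (by positivity), ← Real.sqrt_eq_rpow]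
    congr 1
    rw [real_inner_smul_left, real_inner_smul_right, hq, hni i, hni j]
    unfold auxG auxQ auxP
    rw [← hinv]
    ring
  -- eventual differentiability with explicit derivative
  have E : ∀ᶠ t in nhds (0:ℝ), ∀ i j, j ≠ i →
      HasDerivAt (fun s => (1 - auxG (c0 i j) (c1 i j) (c2 i j) (b i) (b j) s) ^ (-(α/2)))
        (auxD (α/2) (c0 i j) (c1 i j) (c2 i j) (b i) (b j) t) t := by
    rw [Filter.eventually_all]
    intro i
    rw [Filter.eventually_all]
    intro j
    by_cases hij : j ≠ i
    · exact (aux1 (hb i) (hb j) (α/2) (c0 i j) (c1 i j) (c2 i j) (hc0lt i j hij)).mono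
        fun t ht _ => ht
    · exact Filter.Eventually.of_forall fun t hcon => absurd hcon hij
  have hf' : ∀ᶠ t in nhds (0:ℝ), HasDerivAt f
      (∑ i, ∑ j ∈ Finset.univ.filter (· ≠ i),
        auxD (α/2) (c0 i j) (c1 i j) (c2 i j) (b i) (b j) t) t := by
    refine E.mono fun t ht => ?_
    rw [hF]
    exact HasDerivAt.fun_sum fun i _ => HasDerivAt.fun_sum fun j hj =>
      ht i j (Finset.mem_filter.1 hj).2
  refine ⟨hf'.mono fun t ht => ht.differentiableAt, ?_⟩
  have hde : deriv f =ᶠ[nhds (0:ℝ)] fun t => ∑ i, ∑ j ∈ Finset.univ.filter (· ≠ i),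
      auxD (α/2) (c0 i j) (c1 i j) (c2 i j) (b i) (b j) t :=
    hf'.mono fun t ht => ht.deriv
  have hd2 : HasDerivAt (fun t => ∑ i, ∑ j ∈ Finset.univ.filter (· ≠ i),
      auxD (α/2) (c0 i j) (c1 i j) (c2 i j) (b i) (b j) t)
      (∑ i, ∑ j ∈ Finset.univ.filter (· ≠ i),
        ((α/2) * (α/2 + 1) * (1 - c0 i j) ^ (-(α/2) - 2) * (c1 i j) ^ 2
          + (α/2) * (1 - c0 i j) ^ (-(α/2) - 1) * (2 * c2 i j - c0 i j * (b i + b j)))) 0 := by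
    refine HasDerivAt.fun_sum fun i _ => HasDerivAt.fun_sum fun j hj => ?_
    have := aux2 (hb i) (hb j) (α/2) (c0 i j) (c1 i j) (c2 i j)
      (hc0lt i j (Finset.mem_filter.1 hj).2)
    exact this.congr_deriv (by ring_nf)
  have := hd2.congr_of_eventuallyEq hde
  refine this.congr_deriv ?_
  refine Finset.sum_congr rfl fun i _ => Finset.sum_congr rfl fun j _ => ?_
  simp only [hc0def, hc1def, hc2def, hbdef]
  rw [real_inner_comm (x j) (h i)]
  ring
end
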